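/- Let G be a graph on n vertices and suppose v is a vertex of G with degree at least 2⌊√n⌋. If the induced subgraph G' = G − N[v] (deleting v and all its neighbors) has a vertex which is a ⌊√(n − 2⌊√n⌋ − 1)⌋-trap in G', then v's removal yields that G has a √n-trap using one extra cop; formally, if G' has an s-trap with s = √(|V(G')|), then G has a (1 + ⌊s⌋)-trap, and 1 + ⌊s⌋ ≤ ⌊√n⌋. -/

import Mathlib

/-!
Put one cop on `v` and never move it: it guards `N[v]`, so every neighbor of the trap vertex
of `G' = G − N[v]` that lies outside `G'` is already controlled, and the cops of the trap in
`G'` take care of the rest. Since `deg v ≥ 2⌊√n⌋`, `G'` has fewer than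
`(⌊√n⌋ + 1)² − 2⌊√n⌋ − 1 = ⌊√n⌋²` vertices, so its trap uses at most `⌊√n⌋ − 1` cops.
-/

/-- The graph `H` has an `s`-trap: a vertex `v` and at most `⌊s⌋` cops placed away
from `v` controlling all neighbors of `v`. -/
def HasTrap {α : Type*} (H : SimpleGraph α) (s : ℝ) : Prop :=
  ∃ v : α, ∃ S : Finset α, v ∉ S ∧ S.card ≤ ⌊s⌋₊ ∧
    ∀ u, H.Adj v u → ∃ c ∈ S, u = c ∨ H.Adj c u

namespace SimpleGraph

variable {V : Type*} (G : SimpleGraph V)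

theorem hasTrap_of_induce {A : Set V} {v : V} {s : ℝ} (hvA : v ∉ A)
    (hA : ∀ u ∉ A, u = v ∨ G.Adj v u) (htrap : HasTrap (G.induce A) s) :
    HasTrap G (1 + ⌊s⌋₊ : ℕ) := by
  classical
  obtain ⟨w, S, hwS, hcard, hcop⟩ := htrap
  refine ⟨w, insert v (S.map (Function.Embedding.subtype _)), ?_, ?_, ?_⟩
  · simp only [Finset.mem_insert, Finset.mem_map, Function.Embedding.coe_subtype, not_or]
    refine ⟨fun hwv => hvA (hwv ▸ w.2), ?_⟩
    rintro ⟨c, hc, hcw⟩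
    exact hwS (Subtype.ext hcw ▸ hc)
  · rw [Nat.floor_natCast, add_comm]
    exact (Finset.card_insert_le _ _).trans (by simpa using hcard)
  · intro u hwu
    by_cases huA : u ∈ A
    · obtain ⟨c, hc, hcu⟩ := hcop ⟨u, huA⟩ hwu
      refine ⟨c, Finset.mem_insert_of_mem (Finset.mem_map_of_mem _ hc), ?_⟩
      exact hcu.imp (congrArg Subtype.val) id
    · exact ⟨v, Finset.mem_insert_self _ _, hA u huA⟩

variable [Fintype V] [DecidableRel G.Adj]

theorem ncard_nonNeighbors (v : V) :
    {u | u ≠ v ∧ ¬G.Adj v u}.ncard = Fintype.card V - 1 - G.degree v := by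
  classical
  have hcompl : {u | u ≠ v ∧ ¬G.Adj v u} = Gᶜ.neighborSet v := by
    ext u
    simp [compl_adj, ne_comm]
  rw [hcompl, Set.ncard_eq_toFinset_card', Set.toFinset_card, card_neighborSet_eq_degree,
    degree_compl]

end SimpleGraph

theorem Nat.sqrt_lt_sqrt_of_add_two_mul_sqrt_lt {m n : ℕ} (h : m + 2 * n.sqrt < n) :
    m.sqrt < n.sqrt := by
  have hn := Nat.lt_succ_sqrt' n
  rw [Nat.sqrt_lt']
  nlinarith

/-- High-degree case of the trap induction: if `v` has degree at least `2⌊√n⌋` and the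
graph `G' = G − N[v]` has an `s`-trap with `s = √|V(G')|`, then `G` has a
`(1 + ⌊s⌋)`-trap, and `1 + ⌊s⌋ ≤ ⌊√n⌋`. -/
theorem stmt_15 {V : Type*} [Fintype V] (G : SimpleGraph V) [DecidableRel G.Adj]
    (v : V) (hdeg : 2 * ⌊Real.sqrt (Fintype.card V)⌋₊ ≤ G.degree v)
    (A : Set V) (hA : A = {u : V | u ≠ v ∧ ¬G.Adj v u})
    (htrap : HasTrap (G.induce A) (Real.sqrt A.ncard)) :
    HasTrap G (1 + ⌊Real.sqrt A.ncard⌋₊ : ℕ) ∧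
      1 + ⌊Real.sqrt A.ncard⌋₊ ≤ ⌊Real.sqrt (Fintype.card V)⌋₊ := by
  subst hA
  have hclosed : ∀ u ∉ {u | u ≠ v ∧ ¬G.Adj v u}, u = v ∨ G.Adj v u := by
    intro u hu
    simpa [or_iff_not_imp_left] using hu
  refine ⟨G.hasTrap_of_induce (fun hv => hv.1 rfl) hclosed htrap, ?_⟩
  simp only [Real.nat_floor_real_sqrt_eq_nat_sqrt] at hdeg ⊢
  rw [Nat.one_add_le_iff]
  apply Nat.sqrt_lt_sqrt_of_add_two_mul_sqrt_lt
  have := G.degree_lt_card_verts v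
  rw [G.ncard_nonNeighbors v]
  omega
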